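/- arXiv:1008.5342 — 2 statements merged into one kernel-verified Lean document; each statement's English description precedes it below -/
import Mathlib

section
/- Let c_n be defined by the reciprocal power series (Σ_{n≥0} a_n t^n)^{-1} = Σ_{n≥0} c_n t^n where a_n = 1/(n+1) are the kernel coefficients of the Dirichlet space with norm ‖Σb_n z^n‖² = Σ(n+1)|b_n|². Then c_0 > 0 and c_n ≤ 0 for all n ≥ 1. -/
/-!
Kaluza's lemma: if `a` is a positive log-convex sequence, i.e. `a (n+1)² ≤ a n * a (n+2)`, then the
reciprocal of `Σ aₙ tⁿ` has positive constant term and nonpositive higher coefficients. Writing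
`c = (Σ aₙ tⁿ)⁻¹`, the convolution identities `Σ_{i+j=n} aᵢ cⱼ = 0` at `n` and `n + 1` combine to
`aₙ a₀ c_{n+1} = Σ_{i+j=n} (a_{n+1} aᵢ - aₙ a_{i+1}) cⱼ`, where log-convexity makes every bracket
nonnegative and the `j = 0` bracket vanishes, so induction applies. The sequence `1 / (n + 1)` is
log-convex since `(n + 1)(n + 3) ≤ (n + 2)²`.
-/

open PowerSeries Finset

namespace PowerSeries

section Field

variable {k : Type*} [Field k]

theorem sum_antidiagonal_coeff_mul_coeff_inv {φ : k⟦X⟧} (hφ : constantCoeff φ ≠ 0) {n : ℕ}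
    (hn : n ≠ 0) : ∑ p ∈ antidiagonal n, coeff p.1 φ * coeff p.2 φ⁻¹ = 0 := by
  rw [← coeff_mul, PowerSeries.mul_inv_cancel φ hφ, coeff_one, if_neg hn]

theorem coeff_zero_inv_mk (a : ℕ → k) : coeff 0 (mk a)⁻¹ = (a 0)⁻¹ := by
  rw [coeff_zero_eq_constantCoeff_apply, constantCoeff_inv, constantCoeff_mk]

theorem mul_coeff_succ_inv_mk {a : ℕ → k} (ha : a 0 ≠ 0) (n : ℕ) :
    a 0 * coeff (n + 1) (mk a)⁻¹ = -∑ p ∈ antidiagonal n, a (p.1 + 1) * coeff p.2 (mk a)⁻¹ := by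
  have h := sum_antidiagonal_coeff_mul_coeff_inv (constantCoeff_mk (f := a) ▸ ha) n.succ_ne_zero
  rw [Nat.sum_antidiagonal_succ] at h
  simp only [coeff_mk] at h
  linear_combination h

theorem mul_mul_coeff_succ_inv_mk {a : ℕ → k} (ha : a 0 ≠ 0) {n : ℕ} (hn : n ≠ 0) :
    a n * a 0 * coeff (n + 1) (mk a)⁻¹ =
      ∑ p ∈ antidiagonal n, (a (n + 1) * a p.1 - a n * a (p.1 + 1)) * coeff p.2 (mk a)⁻¹ := by
  have h := sum_antidiagonal_coeff_mul_coeff_inv (constantCoeff_mk (f := a) ▸ ha) hn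
  simp only [coeff_mk] at h
  simp only [sub_mul, sum_sub_distrib, mul_assoc, ← mul_sum, h, mul_coeff_succ_inv_mk ha]
  ring

end Field

section Kaluza

variable {k : Type*} [Field k] [LinearOrder k] [IsStrictOrderedRing k] {a : ℕ → k}

theorem succ_mul_le_mul_succ_of_sq_le (hpos : ∀ n, 0 < a n)
    (hconv : ∀ n, a (n + 1) ^ 2 ≤ a n * a (n + 2)) {i n : ℕ} (hin : i ≤ n) :
    a (i + 1) * a n ≤ a i * a (n + 1) := by
  have hratio : Monotone fun n => a (n + 1) / a n := by
    refine monotone_nat_of_le_succ fun n => ?_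
    rw [div_le_div_iff₀ (hpos n) (hpos (n + 1))]
    linarith [hconv n]
  have := hratio hin
  rw [div_le_div_iff₀ (hpos i) (hpos n)] at this
  linarith

theorem coeff_zero_inv_mk_pos (ha : 0 < a 0) : 0 < coeff 0 (mk a)⁻¹ := by
  rw [coeff_zero_inv_mk]
  exact inv_pos.2 ha

theorem coeff_inv_mk_nonpos_of_sq_le (hpos : ∀ n, 0 < a n)
    (hconv : ∀ n, a (n + 1) ^ 2 ≤ a n * a (n + 2)) {n : ℕ} (hn : 1 ≤ n) :
    coeff n (mk a)⁻¹ ≤ 0 := by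
  induction n using Nat.strong_induction_on with
  | _ n ih =>
  obtain _ | _ | n := n
  · omega
  · refine nonpos_of_mul_nonpos_right ?_ (hpos 0)
    rw [mul_coeff_succ_inv_mk (hpos 0).ne', Nat.antidiagonal_zero, sum_singleton, neg_nonpos]
    exact (mul_pos (hpos 1) (coeff_zero_inv_mk_pos (hpos 0))).le
  · refine nonpos_of_mul_nonpos_right ?_ (mul_pos (hpos (n + 1)) (hpos 0))
    rw [mul_mul_coeff_succ_inv_mk (hpos 0).ne' n.succ_ne_zero]
    refine sum_nonpos fun p hp => ?_
    rw [HasAntidiagonal.mem_antidiagonal] at hp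
    obtain ⟨i, _ | j⟩ := p
    · obtain rfl : i = n + 1 := hp
      simp [mul_comm]
    · refine mul_nonpos_of_nonneg_of_nonpos ?_ (ih (j + 1) (by omega) (by omega))
      have := succ_mul_le_mul_succ_of_sq_le hpos hconv (i := i) (n := n + 1) (by omega)
      linarith

end Kaluza

end PowerSeries

/-- The coefficients of the reciprocal of the power series `Σ_{n≥0} t^n/(n+1)`
(the kernel coefficients of the Dirichlet space with norm `Σ (n+1)|b_n|²`)
satisfy `c_0 > 0` and `c_n ≤ 0` for `n ≥ 1`: the Complete Nevanlinna–Pick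
property of the Dirichlet space. -/
theorem dirichlet_CNPP_coefficients :
    0 < PowerSeries.coeff (R := ℝ) 0 (PowerSeries.mk fun n : ℕ => (1 : ℝ) / (n + 1))⁻¹ ∧
    ∀ n : ℕ, 1 ≤ n →
      PowerSeries.coeff (R := ℝ) n (PowerSeries.mk fun n : ℕ => (1 : ℝ) / (n + 1))⁻¹ ≤ 0 := by
  have hpos : ∀ n : ℕ, 0 < (1 : ℝ) / (n + 1) := fun n => by positivity
  have hconv (n : ℕ) :
      ((1 : ℝ) / ((n + 1 : ℕ) + 1)) ^ 2 ≤ 1 / (n + 1) * (1 / ((n + 2 : ℕ) + 1)) := by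
    push_cast
    rw [div_pow, one_pow, div_mul_div_comm, one_mul, div_le_div_iff₀ (by positivity) (by positivity)]
    nlinarith
  exact ⟨coeff_zero_inv_mk_pos (hpos 0), fun n hn => coeff_inv_mk_nonpos_of_sq_le hpos hconv hn⟩
end

section
/- The coefficients c_n of the reciprocal power series of Σ_{n≥0} a_n t^n with a_0 = 1, a_n = n for n ≥ 1 (the kernel coefficients of the norm |||f|||² = |b_0|² + Σ_{n≥1} n|b_n|²) do NOT all satisfy c_n ≤ 0 for n ≥ 1; i.e., there exists n ≥ 1 with c_n > 0. -/
/-!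
The series is `1 + t/(1-t)² = (1 - t + t²)/(1-t)²`, and `(1 - t + t²)(1 + t) = 1 + t³`, so its
reciprocal `Σ cₙ tⁿ` satisfies `(1 + t³) Σ cₙ tⁿ = (1 - t)²(1 + t)`, a cubic. Comparing
coefficients gives `c₁ = -1` and `cₙ₊₃ = -cₙ` for `n ≥ 1`, hence `c₄ = 1`.
-/

open PowerSeries

noncomputable def weightSeries (R : Type*) [CommRing R] : R⟦X⟧ :=
  mk fun n : ℕ => if n = 0 then (1 : R) else n

section CommRing

variable (R : Type*) [CommRing R]

theorem weightSeries_mul_one_sub_X :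
    weightSeries R * (1 - X) = mk fun n : ℕ => if n = 1 then (0 : R) else 1 := by
  ext (_ | _ | n) <;> simp [weightSeries, mul_sub, mul_comm _ X, coeff_succ_X_mul]

theorem weightSeries_mul_one_sub_X_sq : weightSeries R * (1 - X) ^ 2 = 1 - X + X ^ 2 := by
  rw [sq, ← mul_assoc, weightSeries_mul_one_sub_X]
  ext (_ | _ | _ | n) <;> simp [mul_sub, mul_comm _ X, coeff_succ_X_mul, coeff_X, coeff_X_pow]

theorem weightSeries_mul_cubic : weightSeries R * ((1 - X) ^ 2 * (1 + X)) = 1 + X ^ 3 := by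
  rw [← mul_assoc, weightSeries_mul_one_sub_X_sq]
  ring

end CommRing

section Field

variable {K : Type*} [Field K]

theorem weightSeries_inv_mul_one_add_X_pow_three :
    (weightSeries K)⁻¹ * (1 + X ^ 3) = 1 - X - X ^ 2 + X ^ 3 := by
  have hconst : constantCoeff (weightSeries K) ≠ 0 := by simp [weightSeries]
  rw [← weightSeries_mul_cubic, ← mul_assoc, PowerSeries.inv_mul_cancel _ hconst]
  ring

theorem coeff_one_weightSeries_inv : coeff 1 (weightSeries K)⁻¹ = -1 := by
  have h := congrArg (coeff 1) (weightSeries_inv_mul_one_add_X_pow_three (K := K))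
  simpa [mul_add, coeff_X, coeff_X_pow, coeff_mul_X_pow'] using h

theorem coeff_add_three_weightSeries_inv {n : ℕ} (hn : n ≠ 0) :
    coeff (n + 3) (weightSeries K)⁻¹ = -coeff n (weightSeries K)⁻¹ := by
  have h := congrArg (coeff (n + 3)) (weightSeries_inv_mul_one_add_X_pow_three (K := K))
  simp [hn, mul_add, coeff_X, coeff_X_pow, coeff_mul_X_pow'] at h
  linear_combination h

end Field

/-- The renorming `|||f|||² = |b_0|² + Σ_{n≥1} n |b_n|²` of the Dirichlet space fails
the Complete Nevanlinna–Pick property: some coefficient `c_n`, `n ≥ 1`, of the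
reciprocal of the power series `1 + Σ_{n≥1} n t^n` is strictly positive. -/
theorem dirichlet_renorm_fails_CNPP :
    ∃ n : ℕ, 1 ≤ n ∧
      0 < PowerSeries.coeff (R := ℝ) n
        (PowerSeries.mk fun n : ℕ => if n = 0 then (1 : ℝ) else n)⁻¹ := by
  refine ⟨4, le_add_self, ?_⟩
  change 0 < coeff (1 + 3) (weightSeries ℝ)⁻¹
  rw [coeff_add_three_weightSeries_inv one_ne_zero, coeff_one_weightSeries_inv]
  norm_num
end
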